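/- arXiv:1608.05856 — 3 statements merged into one kernel-verified Lean document; each statement's English description precedes it below -/
import Mathlib

section
/- Fix X, L ∈ ℝ^{m×n}, λ₂ > 0, 0 < q < 1, ε > 0, and μ₂ > 1. Define G(S) = λ₂·Σ_{ij}(|S_{ij}| + ε)^q + (1/2)·‖L + S − X‖_F² for S ∈ ℝ^{m×n}. Given S^k ∈ ℝ^{m×n}, set M^k_{ij} = q/(|S^k_{ij}| + ε)^{1−q} and define S^{k+1} entrywise by S^{k+1}_{ij} = S_{λ₂M^k_{ij}/μ₂}( S^k_{ij} − (1/μ₂)·(L + S^k − X)_{ij} ), where S_τ(y) = sign(y)·max(|y| − τ, 0). Then G(S^{k+1}) ≤ G(S^k) − ((μ₂ − 1)/2)·‖S^{k+1} − S^k‖_F². -/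
/-- Squared Frobenius norm of a real matrix. -/
noncomputable def frobNormSq {m n : ℕ} (A : Matrix (Fin m) (Fin n) ℝ) : ℝ :=
  ∑ i, ∑ j, (A i j) ^ 2

/-- The scalar soft-thresholding operator `S_τ(y) = sign(y)·max(|y| − τ, 0)`. -/
noncomputable def softThresh (τ y : ℝ) : ℝ :=
  Real.sign y * max (|y| - τ) 0

/-!
Majorize–minimize. Since `t ↦ (t + ε) ^ q` is concave on `[0, ∞)`, its tangent at `|S^k_ij|`,
whose slope is the weight `M^k_ij`, majorizes it; and the residual term is majorized by its
linearization at `S^k` plus `(μ₂/2)‖S − S^k‖_F²`. The step `S^{k+1}` is the exact minimizer of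
the resulting separable surrogate (soft thresholding is the proximal map of `τ |·|`), so comparing
it with the competitor `S^k` entrywise and using `½(g + d)² = ½g² + g d + ½d²` leaves the gap
`((μ₂ − 1)/2) d²` in each entry.
-/

theorem softThresh_of_abs_le {τ y : ℝ} (h : |y| ≤ τ) : softThresh τ y = 0 := by
  simp [softThresh, h]

theorem softThresh_of_lt {τ y : ℝ} (hτ : 0 ≤ τ) (h : τ < y) : softThresh τ y = y - τ := by
  rw [softThresh, Real.sign_of_pos (by linarith), abs_of_pos (by linarith),
    max_eq_left (by linarith), one_mul]

theorem softThresh_of_lt_neg {τ y : ℝ} (hτ : 0 ≤ τ) (h : y < -τ) : softThresh τ y = y + τ := by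
  rw [softThresh, Real.sign_of_neg (by linarith), abs_of_neg (by linarith),
    max_eq_left (by linarith)]
  ring

theorem softThresh_prox_le {τ : ℝ} (hτ : 0 ≤ τ) (y z : ℝ) :
    τ * |softThresh τ y| + (softThresh τ y - y) ^ 2 / 2 ≤ τ * |z| + (z - y) ^ 2 / 2 := by
  have hz := abs_nonneg z
  rcases le_or_gt |y| τ with hy | hy
  · rw [softThresh_of_abs_le hy]
    have hzy : z * y ≤ |z| * τ := by
      calc z * y ≤ |z * y| := le_abs_self _
        _ = |z| * |y| := abs_mul z y
        _ ≤ |z| * τ := mul_le_mul_of_nonneg_left hy hz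
    rw [abs_zero]
    nlinarith [sq_nonneg z]
  rcases lt_abs.mp hy with hy | hy
  · rw [softThresh_of_lt hτ hy, abs_of_pos (by linarith)]
    nlinarith [le_abs_self z, sq_nonneg (z - y + τ)]
  · rw [softThresh_of_lt_neg hτ (by linarith), abs_of_neg (by linarith)]
    nlinarith [neg_abs_le z, sq_nonneg (z - y - τ)]

theorem softThresh_step_le {c μ s g s' : ℝ} (hc : 0 ≤ c) (hμ : 0 < μ)
    (hs' : s' = softThresh (c / μ) (s - 1 / μ * g)) :
    c * |s'| + g * (s' - s) + μ / 2 * (s' - s) ^ 2 ≤ c * |s| := by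
  have h := softThresh_prox_le (div_nonneg hc hμ.le) (s - 1 / μ * g) s
  rw [← hs'] at h
  have h' := mul_le_mul_of_nonneg_left h hμ.le
  have e1 : μ * (c / μ * |s'| + (s' - (s - 1 / μ * g)) ^ 2 / 2)
      = c * |s'| + g * (s' - s) + μ / 2 * (s' - s) ^ 2 + g ^ 2 / (2 * μ) := by
    field_simp; ring
  have e2 : μ * (c / μ * |s| + (s - (s - 1 / μ * g)) ^ 2 / 2) = c * |s| + g ^ 2 / (2 * μ) := by
    field_simp; ring
  linarith

theorem rpow_le_rpow_add_div_rpow_mul_sub {q u v : ℝ} (hq0 : 0 ≤ q) (hq1 : q ≤ 1)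
    (hu : 0 ≤ u) (hv : 0 < v) : u ^ q ≤ v ^ q + q / v ^ (1 - q) * (u - v) := by
  have hb := rpow_one_add_le_one_add_mul_self
    (by linarith [div_nonneg hu hv.le] : (-1 : ℝ) ≤ u / v - 1) hq0 hq1
  rw [add_sub_cancel, Real.div_rpow hu hv.le, div_le_iff₀ (by positivity)] at hb
  rw [Real.rpow_sub hv, Real.rpow_one]
  calc u ^ q ≤ (1 + q * (u / v - 1)) * v ^ q := hb
    _ = v ^ q + q / (v / v ^ q) * (u - v) := by field_simp

theorem entry_sufficient_decrease {lam q ε μ : ℝ} (hlam : 0 ≤ lam) (hq0 : 0 ≤ q) (hq1 : q ≤ 1)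
    (hε : 0 < ε) (hμ : 0 < μ) {s g s' : ℝ}
    (hs' : s' = softThresh (lam * (q / (|s| + ε) ^ (1 - q)) / μ) (s - 1 / μ * g)) :
    lam * (|s'| + ε) ^ q + 1 / 2 * (g + (s' - s)) ^ 2 + (μ - 1) / 2 * (s' - s) ^ 2
      ≤ lam * (|s| + ε) ^ q + 1 / 2 * g ^ 2 := by
  have hw : 0 ≤ q / (|s| + ε) ^ (1 - q) := by positivity
  have htangent := mul_le_mul_of_nonneg_left (rpow_le_rpow_add_div_rpow_mul_sub hq0 hq1
    (by positivity : 0 ≤ |s'| + ε) (by positivity : 0 < |s| + ε)) hlam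
  have hstep := softThresh_step_le (mul_nonneg hlam hw) hμ hs'
  linarith

/-- One proximal iteratively reweighted step on the sparse part decreases the smoothed
objective `G(S) = λ₂·Σᵢⱼ(|Sᵢⱼ| + ε)^q + (1/2)·‖L + S − X‖_F²` by at least
`((μ₂ − 1)/2)·‖S^{k+1} − S^k‖_F²`. -/
theorem sparse_step_sufficient_decrease {m n : ℕ}
    (X L : Matrix (Fin m) (Fin n) ℝ) (lam2 q ε μ2 : ℝ)
    (hlam2 : 0 < lam2) (hq0 : 0 < q) (hq1 : q < 1) (hε : 0 < ε) (hμ2 : 1 < μ2)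
    (G : Matrix (Fin m) (Fin n) ℝ → ℝ)
    (hG : ∀ S, G S = lam2 * (∑ i, ∑ j, (|S i j| + ε) ^ q)
      + (1 / 2) * frobNormSq (L + S - X))
    (Sk : Matrix (Fin m) (Fin n) ℝ)
    (Mk : Matrix (Fin m) (Fin n) ℝ)
    (hMk : ∀ i j, Mk i j = q / (|Sk i j| + ε) ^ (1 - q))
    (Sk1 : Matrix (Fin m) (Fin n) ℝ)
    (hSk1 : ∀ i j, Sk1 i j =
      softThresh (lam2 * Mk i j / μ2) (Sk i j - (1 / μ2) * (L + Sk - X) i j)) :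
    G Sk1 ≤ G Sk - ((μ2 - 1) / 2) * frobNormSq (Sk1 - Sk) := by
  have hentry : ∀ i j,
      lam2 * (|Sk1 i j| + ε) ^ q + 1 / 2 * (L + Sk1 - X) i j ^ 2
        + (μ2 - 1) / 2 * (Sk1 - Sk) i j ^ 2
      ≤ lam2 * (|Sk i j| + ε) ^ q + 1 / 2 * (L + Sk - X) i j ^ 2 := by
    intro i j
    have hresidual : (L + Sk1 - X) i j = (L + Sk - X) i j + (Sk1 i j - Sk i j) := by
      simp only [Matrix.add_apply, Matrix.sub_apply]; ring
    rw [hresidual, Matrix.sub_apply Sk1 Sk]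
    exact entry_sufficient_decrease hlam2.le hq0.le hq1.le hε (zero_lt_one.trans hμ2)
      (by rw [hSk1, hMk])
  have hsum := Finset.sum_le_sum fun i (_ : i ∈ Finset.univ) => Finset.sum_le_sum fun j (_ : j ∈ Finset.univ) => hentry i j
  simp only [Finset.sum_add_distrib, ← Finset.mul_sum] at hsum
  rw [hG, hG, frobNormSq, frobNormSq, frobNormSq]
  linarith
end

section
/- Under the hypotheses of the previous result (g : [0,∞) → [0,∞) continuous, concave, increasing; f differentiable with L(f)-Lipschitz gradient and f ≥ 0; F(X) = Σ_{i=1}^m g(σ_i(X)) + f(X); μ > L(f); L^{k+1} a global minimizer of the linearized proximal surrogate Σ_i w_i^k·σ_i(X) + ⟨∇f(L^k), X − L^k⟩ + (μ/2)·‖X − L^k‖_F² with w_i^k a supergradient of g at σ_i(L^k)), the squared successive differences are summable with the explicit bound Σ_{k=1}^∞ ‖L^k − L^{k+1}‖_F² ≤ 2·F(L^1)/(μ − L(f)). -/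
attribute [local instance] Matrix.frobeniusSeminormedAddCommGroup
  Matrix.frobeniusNormedAddCommGroup Matrix.frobeniusNormedSpace

/-- Frobenius norm of a real matrix. -/
noncomputable def frobNorm {m n : ℕ} (A : Matrix (Fin m) (Fin n) ℝ) : ℝ :=
  Real.sqrt (frobNormSq A)

/-- The Frobenius inner product `⟨A, B⟩ = Σᵢⱼ Aᵢⱼ·Bᵢⱼ`. -/
noncomputable def frobInner {m n : ℕ} (A B : Matrix (Fin m) (Fin n) ℝ) : ℝ :=
  ∑ i, ∑ j, A i j * B i j

/-- The Frobenius inner product with a fixed matrix `G`, as a continuous linear map. -/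
noncomputable def frobInnerCLM {m n : ℕ} (G : Matrix (Fin m) (Fin n) ℝ) :
    Matrix (Fin m) (Fin n) ℝ →L[ℝ] ℝ :=
  LinearMap.toContinuousLinearMap
    { toFun := fun H => frobInner G H
      map_add' := by
        intro A B
        simp [frobInner, Matrix.add_apply, mul_add, Finset.sum_add_distrib]
      map_smul' := by
        intro c A
        simp [frobInner, Matrix.smul_apply, Finset.mul_sum, mul_comm, mul_left_comm,
          smul_eq_mul] }

/-- The singular values of a real `m × n` matrix `A`, arranged in nonincreasing order:
the square roots of the eigenvalues of `A * Aᵀ`, sorted in nonincreasing order. -/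
noncomputable def singularValues {m n : ℕ} (A : Matrix (Fin m) (Fin n) ℝ) :
    Fin (min m n) → ℝ := fun i =>
  Real.sqrt
    ((Matrix.isHermitian_mul_conjTranspose_self A).eigenvalues
      (Tuple.sort (fun j => -(Matrix.isHermitian_mul_conjTranspose_self A).eigenvalues j)
        (Fin.castLE (min_le_left m n) i)))

/-! Supergradients of `g` and the descent lemma for `f` bound `F X - F Lᵏ` by the increment of
the linearized surrogate from `Lᵏ` to `X`, minus `(μ - L(f))/2 · ‖X - Lᵏ‖²`. At the minimizer
`X = Lᵏ⁺¹` that increment is `≤ 0`, which gives the sufficient decrease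
`(μ - L(f))/2 · ‖Lᵏ⁺¹ - Lᵏ‖² ≤ F Lᵏ - F Lᵏ⁺¹`; it telescopes because `F ≥ 0`. -/

open Finset

/-- The descent lemma; `hL` is the one-sided form of `L`-Lipschitz continuity of `f'`. -/
theorem le_add_fderiv_add_sq {E : Type*} [NormedAddCommGroup E] [NormedSpace ℝ E]
    {f : E → ℝ} {f' : E → E →L[ℝ] ℝ} {L : ℝ} (hf : ∀ x, HasFDerivAt f (f' x) x)
    (hL : ∀ x y, f' y (y - x) - f' x (y - x) ≤ L * ‖y - x‖ ^ 2) (x y : E) :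
    f y ≤ f x + f' x (y - x) + L / 2 * ‖y - x‖ ^ 2 := by
  set d := y - x
  -- `hL` makes `φ` antitone on `[0, ∞)`, and `φ 1 ≤ φ 0` is the claim.
  let φ : ℝ → ℝ := fun t => f (x + t • d) - t * f' x d - L / 2 * t ^ 2 * ‖d‖ ^ 2
  have hφ : ∀ t, HasDerivAt φ (f' (x + t • d) d - f' x d - L * t * ‖d‖ ^ 2) t := by
    intro t
    have hline : HasDerivAt (fun s : ℝ => x + s • d) d t := by
      simpa using ((hasDerivAt_id t).smul_const d).const_add x
    exact ((((hf _).comp_hasDerivAt t hline).sub ((hasDerivAt_id t).mul_const (f' x d))).sub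
      (((hasDerivAt_pow 2 t).const_mul (L / 2)).mul_const (‖d‖ ^ 2)))
      |>.congr_deriv (by rw [one_mul, Nat.cast_ofNat, Nat.add_one_sub_one, pow_one]; ring)
  have hφ_anti : AntitoneOn φ (Set.Ici 0) := by
    refine antitoneOn_of_hasDerivWithinAt_nonpos (convex_Ici 0)
      (fun t _ => (hφ t).continuousAt.continuousWithinAt) (fun t _ => (hφ t).hasDerivWithinAt) ?_
    intro t ht
    rw [interior_Ici] at ht
    have hbound : t * (f' (x + t • d) d - f' x d) ≤ t * (L * t * ‖d‖ ^ 2) := by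
      have := hL x (x + t • d)
      rw [add_sub_cancel_left, map_smul, map_smul, norm_smul, Real.norm_of_nonneg ht.le,
        smul_eq_mul, smul_eq_mul] at this
      linarith
    linarith [le_of_mul_le_mul_left hbound ht]
  have h01 : φ 1 ≤ φ 0 := hφ_anti Set.self_mem_Ici (Set.mem_Ici.mpr zero_le_one) zero_le_one
  simp only [φ, d, one_smul, add_sub_cancel, zero_smul, add_zero] at h01
  linarith

theorem summable_and_tsum_le_of_mul_le_sub {u d : ℕ → ℝ} {c : ℝ} (hc : 0 < c)
    (hu : ∀ k, 0 ≤ u k) (hd : ∀ k, 0 ≤ d k) (hdec : ∀ k, c * d k ≤ u k - u (k + 1)) :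
    Summable d ∧ ∑' k, d k ≤ u 0 / c := by
  have hpartial : ∀ N, ∑ k ∈ range N, d k ≤ u 0 / c := by
    intro N
    rw [le_div_iff₀' hc, mul_sum]
    calc ∑ k ∈ range N, c * d k ≤ ∑ k ∈ range N, (u k - u (k + 1)) :=
          sum_le_sum fun k _ => hdec k
      _ = u 0 - u N := sum_range_sub' u N
      _ ≤ u 0 := sub_le_self _ (hu N)
  exact ⟨summable_of_sum_range_le hd hpartial, Real.tsum_le_of_sum_range_le hd hpartial⟩

section Frobenius

variable {m n : ℕ}

theorem frobNorm_eq_norm (A : Matrix (Fin m) (Fin n) ℝ) : frobNorm A = ‖A‖ := by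
  rw [Matrix.frobenius_norm_def, ← Real.sqrt_eq_rpow, frobNorm, frobNormSq]
  simp_rw [Real.rpow_two, Real.norm_eq_abs, sq_abs]

theorem frobNormSq_eq_norm_sq (A : Matrix (Fin m) (Fin n) ℝ) : frobNormSq A = ‖A‖ ^ 2 := by
  rw [← frobNorm_eq_norm, frobNorm, Real.sq_sqrt]
  exact sum_nonneg fun _ _ => sum_nonneg fun _ _ => sq_nonneg _

theorem frobNormSq_sub_comm (A B : Matrix (Fin m) (Fin n) ℝ) :
    frobNormSq (A - B) = frobNormSq (B - A) := by
  rw [frobNormSq_eq_norm_sq, frobNormSq_eq_norm_sq, norm_sub_rev]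

theorem frobInner_le_norm_mul_norm (A B : Matrix (Fin m) (Fin n) ℝ) :
    frobInner A B ≤ ‖A‖ * ‖B‖ := by
  simpa only [← frobNorm_eq_norm, frobInner, frobNorm, frobNormSq, Fintype.sum_prod_type]
    using Real.sum_mul_le_sqrt_mul_sqrt univ (fun p : Fin m × Fin n => A p.1 p.2)
      (fun p => B p.1 p.2)

theorem frobInner_sub_left (A B C : Matrix (Fin m) (Fin n) ℝ) :
    frobInner (A - B) C = frobInner A C - frobInner B C := by
  simp only [frobInner, Matrix.sub_apply, sub_mul, sum_sub_distrib]

theorem le_add_frobInner_add_frobNormSq {f : Matrix (Fin m) (Fin n) ℝ → ℝ}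
    {gradf : Matrix (Fin m) (Fin n) ℝ → Matrix (Fin m) (Fin n) ℝ} {Lf : ℝ}
    (hdiff : ∀ X, HasFDerivAt f (frobInnerCLM (gradf X)) X)
    (hLip : ∀ X Y, frobNorm (gradf X - gradf Y) ≤ Lf * frobNorm (X - Y))
    (X Y : Matrix (Fin m) (Fin n) ℝ) :
    f Y ≤ f X + frobInner (gradf X) (Y - X) + Lf / 2 * frobNormSq (Y - X) := by
  rw [frobNormSq_eq_norm_sq]
  refine le_add_fderiv_add_sq hdiff (fun X Y => ?_) X Y
  have hLip' := hLip Y X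
  rw [frobNorm_eq_norm, frobNorm_eq_norm] at hLip'
  calc frobInner (gradf Y) (Y - X) - frobInner (gradf X) (Y - X)
      = frobInner (gradf Y - gradf X) (Y - X) := (frobInner_sub_left _ _ _).symm
    _ ≤ ‖gradf Y - gradf X‖ * ‖Y - X‖ := frobInner_le_norm_mul_norm _ _
    _ ≤ Lf * ‖Y - X‖ * ‖Y - X‖ := mul_le_mul_of_nonneg_right hLip' (norm_nonneg _)
    _ = Lf * ‖Y - X‖ ^ 2 := by ring

theorem sufficient_decrease {ι : Type*} [Fintype ι] {g : ℝ → ℝ}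
    {f : Matrix (Fin m) (Fin n) ℝ → ℝ}
    {gradf : Matrix (Fin m) (Fin n) ℝ → Matrix (Fin m) (Fin n) ℝ} {Lf μ : ℝ}
    (hdiff : ∀ X, HasFDerivAt f (frobInnerCLM (gradf X)) X)
    (hLip : ∀ X Y, frobNorm (gradf X - gradf Y) ≤ Lf * frobNorm (X - Y))
    {X Y : Matrix (Fin m) (Fin n) ℝ} {s t w : ι → ℝ}
    (hsuper : ∀ i, g (t i) ≤ g (s i) + w i * (t i - s i))
    (hmin : (∑ i, w i * t i) + frobInner (gradf X) (Y - X) + μ / 2 * frobNormSq (Y - X)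
      ≤ ∑ i, w i * s i) :
    (μ - Lf) / 2 * frobNormSq (Y - X) ≤ ((∑ i, g (s i)) + f X) - ((∑ i, g (t i)) + f Y) := by
  have hg : ∑ i, g (t i) ≤ ∑ i, g (s i) + (∑ i, w i * t i - ∑ i, w i * s i) := by
    simpa only [sum_add_distrib, mul_sub, sum_sub_distrib] using sum_le_sum fun i _ => hsuper i
  have hf := le_add_frobInner_add_frobNormSq hdiff hLip X Y
  linarith

theorem singularValues_nonneg (A : Matrix (Fin m) (Fin n) ℝ) (i : Fin (min m n)) :
    0 ≤ singularValues A i :=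
  Real.sqrt_nonneg _

end Frobenius

theorem pira_successive_differences_summable_general {m n : ℕ}
    (g : ℝ → ℝ)
    (hg_nonneg : ∀ t, 0 ≤ t → 0 ≤ g t)
    (f : Matrix (Fin m) (Fin n) ℝ → ℝ)
    (gradf : Matrix (Fin m) (Fin n) ℝ → Matrix (Fin m) (Fin n) ℝ)
    (Lf : ℝ)
    (hdiff : ∀ X, HasFDerivAt f (frobInnerCLM (gradf X)) X)
    (hLip : ∀ X Y, frobNorm (gradf X - gradf Y) ≤ Lf * frobNorm (X - Y))
    (hf_nonneg : ∀ X, 0 ≤ f X)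
    (F : Matrix (Fin m) (Fin n) ℝ → ℝ)
    (hF : ∀ X, F X = (∑ i, g (singularValues X i)) + f X)
    (μ : ℝ) (hμ : Lf < μ)
    (L : ℕ → Matrix (Fin m) (Fin n) ℝ)
    (hstep : ∀ k : ℕ, ∃ w : Fin (min m n) → ℝ,
      (∀ i, 0 ≤ w i) ∧
      (∀ i, ∀ t : ℝ, 0 ≤ t →
        g t ≤ g (singularValues (L k) i) + w i * (t - singularValues (L k) i)) ∧
      (∀ X : Matrix (Fin m) (Fin n) ℝ,
        (∑ i, w i * singularValues (L (k + 1)) i)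
            + frobInner (gradf (L k)) (L (k + 1) - L k)
            + (μ / 2) * frobNormSq (L (k + 1) - L k)
          ≤ (∑ i, w i * singularValues X i)
            + frobInner (gradf (L k)) (X - L k)
            + (μ / 2) * frobNormSq (X - L k))) :
    Summable (fun k : ℕ => frobNormSq (L (k + 1) - L (k + 2))) ∧
    (∑' k : ℕ, frobNormSq (L (k + 1) - L (k + 2))) ≤ 2 * F (L 1) / (μ - Lf) := by
  have hF_nonneg : ∀ X, 0 ≤ F X := fun X => by
    rw [hF]
    exact add_nonneg (sum_nonneg fun i _ => hg_nonneg _ (singularValues_nonneg X i))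
      (hf_nonneg X)
  have hdecrease : ∀ k : ℕ, (μ - Lf) / 2 * frobNormSq (L (k + 1) - L (k + 2))
      ≤ F (L (k + 1)) - F (L (k + 2)) := fun k => by
    obtain ⟨w, -, hsuper, hmin⟩ := hstep (k + 1)
    rw [frobNormSq_sub_comm, hF, hF]
    exact sufficient_decrease hdiff hLip (fun i => hsuper i _ (singularValues_nonneg _ i))
      (by simpa [frobInner, frobNormSq] using hmin (L (k + 1)))
  have h := summable_and_tsum_le_of_mul_le_sub (half_pos (sub_pos.mpr hμ))
    (fun k => hF_nonneg (L (k + 1))) (fun k => by rw [frobNormSq_eq_norm_sq]; positivity)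
    hdecrease
  rwa [div_div_eq_mul_div, mul_comm] at h

/-- Summability of squared successive differences for the proximal iteratively reweighted
scheme: under the descent-lemma hypotheses with `f ≥ 0` and `g ≥ 0` on `[0,∞)`,
`Σ_{k=1}^∞ ‖L^k − L^{k+1}‖_F² ≤ 2·F(L¹)/(μ − L(f))`. -/
theorem pira_successive_differences_summable {m n : ℕ} (hmn : m ≤ n)
    (g : ℝ → ℝ)
    (hg_nonneg : ∀ t, 0 ≤ t → 0 ≤ g t)
    (hg_cont : ContinuousOn g (Set.Ici 0))
    (hg_concave : ConcaveOn ℝ (Set.Ici 0) g)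
    (hg_mono : MonotoneOn g (Set.Ici 0))
    (f : Matrix (Fin m) (Fin n) ℝ → ℝ)
    (gradf : Matrix (Fin m) (Fin n) ℝ → Matrix (Fin m) (Fin n) ℝ)
    (Lf : ℝ)
    (hdiff : ∀ X, HasFDerivAt f (frobInnerCLM (gradf X)) X)
    (hLip : ∀ X Y, frobNorm (gradf X - gradf Y) ≤ Lf * frobNorm (X - Y))
    (hf_nonneg : ∀ X, 0 ≤ f X)
    (F : Matrix (Fin m) (Fin n) ℝ → ℝ)
    (hF : ∀ X, F X = (∑ i, g (singularValues X i)) + f X)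
    (μ : ℝ) (hμ : Lf < μ)
    (L : ℕ → Matrix (Fin m) (Fin n) ℝ)
    (hstep : ∀ k : ℕ, ∃ w : Fin (min m n) → ℝ,
      (∀ i, 0 ≤ w i) ∧
      (∀ i, ∀ t : ℝ, 0 ≤ t →
        g t ≤ g (singularValues (L k) i) + w i * (t - singularValues (L k) i)) ∧
      (∀ X : Matrix (Fin m) (Fin n) ℝ,
        (∑ i, w i * singularValues (L (k + 1)) i)
            + frobInner (gradf (L k)) (L (k + 1) - L k)
            + (μ / 2) * frobNormSq (L (k + 1) - L k)
          ≤ (∑ i, w i * singularValues X i)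
            + frobInner (gradf (L k)) (X - L k)
            + (μ / 2) * frobNormSq (X - L k))) :
    Summable (fun k : ℕ => frobNormSq (L (k + 1) - L (k + 2))) ∧
    (∑' k : ℕ, frobNormSq (L (k + 1) - L (k + 2))) ≤ 2 * F (L 1) / (μ - Lf) :=
  pira_successive_differences_summable_general g hg_nonneg f gradf Lf hdiff hLip hf_nonneg F hF μ hμ
    L hstep
end

section
/- Fix X ∈ ℝ^{m×n} with m ≤ n, λ₁, λ₂ > 0, 0 < p, q < 1, ε > 0, and μ₁, μ₂ > 1. Define the smoothed objective W(L, S) = λ₁·Σ_{i=1}^m (σ_i(L) + ε)^p + λ₂·Σ_{ij}(|S_{ij}| + ε)^q + (1/2)·‖L + S − X‖_F². Suppose the sequence (L^k, S^k) is generated so that L^{k+1} is a global minimizer over L of Σ_i (λ₁ w_i^k/μ₁)·σ_i(L) + (1/2)·‖L − (L^k − (1/μ₁)(L^k + S^k − X))‖_F² with w_i^k = p/(σ_i(L^k) + ε)^{1−p}, and S^{k+1} is a global minimizer over S of Σ_{ij} (λ₂ M^k_{ij}/μ₂)·|S_{ij}| + (1/2)·‖S − (S^k − (1/μ₂)(L^{k+1}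 + S^k − X))‖_F² with M^k_{ij} = q/(|S^k_{ij}| + ε)^{1−q}. Then the objective values decrease monotonically: W(L^{k+1}, S^{k+1}) ≤ W(L^k, S^k) for every k. -/
lemma frobNormSq_nonneg {m n : ℕ} (A : Matrix (Fin m) (Fin n) ℝ) : 0 ≤ frobNormSq A := by
  unfold frobNormSq; positivity

lemma frob_identity {m n : ℕ} (D G : Matrix (Fin m) (Fin n) ℝ) (c : ℝ) :
    frobNormSq (D + c • G) = (1 - c) * frobNormSq D + c * frobNormSq (D + G)
      + (c ^ 2 - c) * frobNormSq G := by
  unfold frobNormSq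
  simp only [Finset.mul_sum, ← Finset.sum_add_distrib]
  refine Finset.sum_congr rfl fun i _ => ?_
  refine Finset.sum_congr rfl fun j _ => ?_
  simp only [Matrix.add_apply, Matrix.smul_apply, smul_eq_mul]
  ring

lemma frob_smul {m n : ℕ} (G : Matrix (Fin m) (Fin n) ℝ) (c : ℝ) :
    frobNormSq (c • G) = c ^ 2 * frobNormSq G := by
  unfold frobNormSq
  simp only [Finset.mul_sum]
  refine Finset.sum_congr rfl fun i _ => ?_
  refine Finset.sum_congr rfl fun j _ => ?_
  simp only [Matrix.smul_apply, smul_eq_mul]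
  ring

lemma tangent_le (p ε : ℝ) (hp0 : 0 < p) (hp1 : p < 1) (hε : 0 < ε)
    {a b : ℝ} (ha : 0 ≤ a) (hb : 0 ≤ b) :
    (b + ε) ^ p ≤ (a + ε) ^ p + (p / (a + ε) ^ (1 - p)) * (b - a) := by
  have hx : (0:ℝ) < a + ε := by linarith
  have hy : (0:ℝ) < b + ε := by linarith
  have hs : (-1:ℝ) ≤ (b + ε) / (a + ε) - 1 := by
    have : 0 ≤ (b + ε) / (a + ε) := by positivity
    linarith
  have hber := rpow_one_add_le_one_add_mul_self hs hp0.le hp1.le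
  have heq : 1 + ((b + ε) / (a + ε) - 1) = (b + ε) / (a + ε) := by ring
  rw [heq] at hber
  have hmul := mul_le_mul_of_nonneg_left hber (Real.rpow_nonneg hx.le p)
  rw [← Real.mul_rpow hx.le (by positivity), mul_div_cancel₀ _ hx.ne'] at hmul
  refine hmul.trans_eq ?_
  have h1 : (a + ε) ^ (1 - p) = (a + ε) ^ (1:ℝ) / (a + ε) ^ p := by
    rw [← Real.rpow_sub hx]
  rw [h1, Real.rpow_one]
  field_simp
  ring

lemma key_step {ι : Type*} [Fintype ι] (lam p ε μ : ℝ) (hlam : 0 < lam)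
    (hp0 : 0 < p) (hp1 : p < 1) (hε : 0 < ε) (hμ : 1 < μ)
    (σo σn : ι → ℝ) (ho : ∀ i, 0 ≤ σo i) (hn : ∀ i, 0 ≤ σn i)
    (Fn Fo Fd : ℝ) (hFd : 0 ≤ Fd)
    (h : (∑ i, (lam * (p / (σo i + ε) ^ (1 - p)) / μ) * σn i)
        + (1 / 2) * ((1 - 1/μ) * Fd + (1/μ) * Fn + ((1/μ) ^ 2 - 1/μ) * Fo)
      ≤ (∑ i, (lam * (p / (σo i + ε) ^ (1 - p)) / μ) * σo i)
        + (1 / 2) * ((1/μ) ^ 2 * Fo)) :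
    lam * (∑ i, (σn i + ε) ^ p) + (1 / 2) * Fn
      ≤ lam * (∑ i, (σo i + ε) ^ p) + (1 / 2) * Fo := by
  have hμ0 : 0 < μ := lt_trans one_pos hμ
  have hne : μ ≠ 0 := hμ0.ne'
  have hsum1 : ∑ i, (lam * (p / (σo i + ε) ^ (1 - p)) / μ) * σn i
      = (∑ i, (lam * (p / (σo i + ε) ^ (1 - p))) * σn i) / μ := by
    rw [Finset.sum_div]; exact Finset.sum_congr rfl fun i _ => by ring
  have hsum2 : ∑ i, (lam * (p / (σo i + ε) ^ (1 - p)) / μ) * σo i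
      = (∑ i, (lam * (p / (σo i + ε) ^ (1 - p))) * σo i) / μ := by
    rw [Finset.sum_div]; exact Finset.sum_congr rfl fun i _ => by ring
  rw [hsum1, hsum2] at h
  set Sn := ∑ i, (lam * (p / (σo i + ε) ^ (1 - p))) * σn i with hSn
  set So := ∑ i, (lam * (p / (σo i + ε) ^ (1 - p))) * σo i with hSo
  have h2 := mul_le_mul_of_nonneg_left h hμ0.le
  have e1 : μ * (Sn / μ + (1 / 2) * ((1 - 1/μ) * Fd + (1/μ) * Fn + ((1/μ) ^ 2 - 1/μ) * Fo))
      = Sn + (1/2) * Fn + ((μ - 1)/2) * Fd + ((1/μ)/2 - 1/2) * Fo := by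
    field_simp; ring
  have e2 : μ * (So / μ + (1 / 2) * ((1/μ) ^ 2 * Fo)) = So + ((1/μ)/2) * Fo := by
    field_simp
  rw [e1, e2] at h2
  have hd : 0 ≤ ((μ - 1)/2) * Fd := by
    apply mul_nonneg _ hFd; linarith
  have hstar : Sn + (1/2) * Fn ≤ So + (1/2) * Fo := by linarith
  have htan : ∑ i, (σn i + ε) ^ p
      ≤ ∑ i, ((σo i + ε) ^ p + (p / (σo i + ε) ^ (1 - p)) * (σn i - σo i)) :=
    Finset.sum_le_sum fun i _ => tangent_le p ε hp0 hp1 hε (ho i) (hn i)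
  have h3 := mul_le_mul_of_nonneg_left htan hlam.le
  have e3 : lam * ∑ i, ((σo i + ε) ^ p + (p / (σo i + ε) ^ (1 - p)) * (σn i - σo i))
      = lam * (∑ i, (σo i + ε) ^ p) + (Sn - So) := by
    rw [Finset.sum_add_distrib, mul_add, hSn, hSo, ← Finset.sum_sub_distrib]
    congr 1
    rw [Finset.mul_sum]
    exact Finset.sum_congr rfl fun i _ => by ring
  rw [e3] at h3
  linarith

/-- Monotone decrease of the smoothed `p,q`-PCP objective
`W(L,S) = λ₁·Σᵢ(σᵢ(L)+ε)^p + λ₂·Σᵢⱼ(|Sᵢⱼ|+ε)^q + (1/2)·‖L+S−X‖_F²` along the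
iterates of the proximal iteratively reweighted algorithm (PIRA). -/
theorem pira_objective_monotone_decrease {m n : ℕ} (hmn : m ≤ n)
    (X : Matrix (Fin m) (Fin n) ℝ) (lam1 lam2 p q ε μ1 μ2 : ℝ)
    (hlam1 : 0 < lam1) (hlam2 : 0 < lam2)
    (hp0 : 0 < p) (hp1 : p < 1) (hq0 : 0 < q) (hq1 : q < 1)
    (hε : 0 < ε) (hμ1 : 1 < μ1) (hμ2 : 1 < μ2)
    (W : Matrix (Fin m) (Fin n) ℝ → Matrix (Fin m) (Fin n) ℝ → ℝ)
    (hW : ∀ L S, W L S =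
      lam1 * (∑ i, (singularValues L i + ε) ^ p)
        + lam2 * (∑ i, ∑ j, (|S i j| + ε) ^ q)
        + (1 / 2) * frobNormSq (L + S - X))
    (L S : ℕ → Matrix (Fin m) (Fin n) ℝ)
    (hLstep : ∀ k : ℕ, ∀ L' : Matrix (Fin m) (Fin n) ℝ,
      (∑ i, (lam1 * (p / (singularValues (L k) i + ε) ^ (1 - p)) / μ1)
          * singularValues (L (k + 1)) i)
        + (1 / 2) * frobNormSq (L (k + 1) - (L k - (1 / μ1) • (L k + S k - X)))
      ≤ (∑ i, (lam1 * (p / (singularValues (L k) i + ε) ^ (1 - p)) / μ1)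
          * singularValues L' i)
        + (1 / 2) * frobNormSq (L' - (L k - (1 / μ1) • (L k + S k - X))))
    (hSstep : ∀ k : ℕ, ∀ S' : Matrix (Fin m) (Fin n) ℝ,
      (∑ i, ∑ j, (lam2 * (q / (|S k i j| + ε) ^ (1 - q)) / μ2) * |S (k + 1) i j|)
        + (1 / 2) * frobNormSq (S (k + 1) - (S k - (1 / μ2) • (L (k + 1) + S k - X)))
      ≤ (∑ i, ∑ j, (lam2 * (q / (|S k i j| + ε) ^ (1 - q)) / μ2) * |S' i j|)
        + (1 / 2) * frobNormSq (S' - (S k - (1 / μ2) • (L (k + 1) + S k - X)))) :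
    ∀ k : ℕ, W (L (k + 1)) (S (k + 1)) ≤ W (L k) (S k) := by
  intro k
  have hσo : ∀ i, 0 ≤ singularValues (L k) i := fun i => Real.sqrt_nonneg _
  have hσn : ∀ i, 0 ≤ singularValues (L (k + 1)) i := fun i => Real.sqrt_nonneg _
  -- L step
  have hL := hLstep k (L k)
  have m1 : L (k + 1) - (L k - (1 / μ1) • (L k + S k - X))
      = (L (k + 1) - L k) + (1 / μ1) • (L k + S k - X) := by abel
  have m2 : L k - (L k - (1 / μ1) • (L k + S k - X)) = (1 / μ1) • (L k + S k - X) := by abel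
  have m3 : (L (k + 1) - L k) + (L k + S k - X) = L (k + 1) + S k - X := by abel
  rw [m1, m2, frob_identity, frob_smul, m3] at hL
  have hA := key_step lam1 p ε μ1 hlam1 hp0 hp1 hε hμ1
    (singularValues (L k)) (singularValues (L (k + 1))) hσo hσn
    (frobNormSq (L (k + 1) + S k - X)) (frobNormSq (L k + S k - X))
    (frobNormSq (L (k + 1) - L k)) (frobNormSq_nonneg _) hL
  -- S step
  have hS := hSstep k (S k)
  have n1 : S (k + 1) - (S k - (1 / μ2) • (L (k + 1) + S k - X))
      = (S (k + 1) - S k) + (1 / μ2) • (L (k + 1) + S k - X) := by abel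
  have n2 : S k - (S k - (1 / μ2) • (L (k + 1) + S k - X))
      = (1 / μ2) • (L (k + 1) + S k - X) := by abel
  have n3 : (S (k + 1) - S k) + (L (k + 1) + S k - X) = L (k + 1) + S (k + 1) - X := by abel
  rw [n1, n2, frob_identity, frob_smul, n3] at hS
  have hS' : (∑ x : Fin m × Fin n, (lam2 * (q / (|S k x.1 x.2| + ε) ^ (1 - q)) / μ2)
          * |S (k + 1) x.1 x.2|)
        + 1 / 2 * ((1 - 1/μ2) * frobNormSq (S (k + 1) - S k)
          + (1/μ2) * frobNormSq (L (k + 1) + S (k + 1) - X)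
          + ((1/μ2) ^ 2 - 1/μ2) * frobNormSq (L (k + 1) + S k - X))
      ≤ (∑ x : Fin m × Fin n, (lam2 * (q / (|S k x.1 x.2| + ε) ^ (1 - q)) / μ2)
          * |S k x.1 x.2|)
        + 1 / 2 * ((1/μ2) ^ 2 * frobNormSq (L (k + 1) + S k - X)) := by
    rw [Fintype.sum_prod_type, Fintype.sum_prod_type]; exact hS
  have hB := key_step lam2 q ε μ2 hlam2 hq0 hq1 hε hμ2
    (fun x : Fin m × Fin n => |S k x.1 x.2|) (fun x : Fin m × Fin n => |S (k + 1) x.1 x.2|)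
    (fun x => abs_nonneg _) (fun x => abs_nonneg _)
    (frobNormSq (L (k + 1) + S (k + 1) - X)) (frobNormSq (L (k + 1) + S k - X))
    (frobNormSq (S (k + 1) - S k)) (frobNormSq_nonneg _) hS'
  rw [Fintype.sum_prod_type, Fintype.sum_prod_type] at hB
  rw [hW, hW]
  linarith [hA, hB]
end
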